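/- arXiv:2410.15361 — 2 statements merged into one kernel-verified Lean document; each statement's English description precedes it below -/
import Mathlib

section
/- For all natural numbers n ≥ 1 and r with 1 ≤ r ≤ n, ∫₀¹ (−log(1 − x)) · x^{r−1}(1 − x)^{n−r} / B(r, n+1−r) dx = H_n − H_{n−r}, where B denotes the Beta function and H_m := ∑_{k=1}^{m} 1/k is the m-th harmonic number (H_0 := 0). -/
/-- `harmonicR m = H_m = ∑_{k=1}^m 1/k`, with `H_0 = 0`. -/
noncomputable def harmonicR (m : ℕ) : ℝ := ∑ k ∈ Finset.range m, (1 : ℝ) / (k + 1)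

/-- The Beta function at natural arguments: `B(a, b) = ∫₀¹ t^(a−1) (1−t)^(b−1) dt`. -/
noncomputable def betaFn (a b : ℕ) : ℝ := ∫ t in (0 : ℝ)..1, t ^ (a - 1) * (1 - t) ^ (b - 1)

/-!
With `r = a + 1`, `n = a + b + 1`, the substitution `u = 1 - x` turns the claim into
`∫₀¹ (-log u) (1-u)^a u^b du = B(a+1, b+1) (H_{a+b+1} - H_b)`.
Both this integral and `B(a+1, b+1) = a! b! / (a+b+1)!` obey the recurrence coming from
`(1-u)^(a+1) = (1-u)^a - u (1-u)^a`, so induction on `a` reduces everything to `a = 0`, where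
`∫₀¹ (-log u) u^b du = 1/(b+1)^2`.
-/

open Real intervalIntegral
open scoped Nat

lemma harmonicR_succ (m : ℕ) : harmonicR (m + 1) = harmonicR m + 1 / (m + 1) := by
  simp [harmonicR, Finset.sum_range_succ]

/-- `B(a+1, b+1)` in closed form. -/
noncomputable def betaNat (a b : ℕ) : ℝ := a ! * b ! / (a + b + 1)!

lemma betaNat_pos (a b : ℕ) : 0 < betaNat a b := by
  unfold betaNat; positivity

lemma betaNat_zero_left (b : ℕ) : betaNat 0 b = 1 / (b + 1) := by
  simp only [betaNat, zero_add, Nat.factorial_zero, Nat.factorial_succ b]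
  push_cast
  field_simp

lemma betaNat_succ_left (a b : ℕ) : betaNat (a + 1) b = betaNat a b * (a + 1) / (a + b + 2) := by
  simp only [betaNat, show a + 1 + b + 1 = (a + b + 1) + 1 by omega, Nat.factorial_succ]
  push_cast
  field_simp
  ring

lemma betaNat_succ_right (a b : ℕ) : betaNat a (b + 1) = betaNat a b * (b + 1) / (a + b + 2) := by
  simp only [betaNat, show a + (b + 1) + 1 = (a + b + 1) + 1 by omega, Nat.factorial_succ]
  push_cast
  field_simp
  ring

lemma integral_mul_one_sub_pow_succ_mul_pow {g : ℝ → ℝ} {x y : ℝ}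
    (hg : IntervalIntegrable g MeasureTheory.volume x y) (a b : ℕ) :
    ∫ u in x..y, g u * ((1 - u) ^ (a + 1) * u ^ b) =
      (∫ u in x..y, g u * ((1 - u) ^ a * u ^ b)) -
        ∫ u in x..y, g u * ((1 - u) ^ a * u ^ (b + 1)) := by
  rw [← integral_sub (hg.mul_continuousOn (by fun_prop)) (hg.mul_continuousOn (by fun_prop))]
  congr 1
  ext u
  ring

lemma integral_one_sub_pow_mul_pow (a b : ℕ) :
    ∫ u in (0 : ℝ)..1, (1 - u) ^ a * u ^ b = betaNat a b := by
  induction a generalizing b with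
  | zero => simp [betaNat_zero_left]
  | succ a ih =>
    have split := integral_mul_one_sub_pow_succ_mul_pow (g := fun _ => (1 : ℝ))
      (x := 0) (y := 1) intervalIntegrable_const a b
    simp only [one_mul] at split
    rw [split, ih, ih, betaNat_succ_left, betaNat_succ_right]
    field_simp
    ring

lemma betaFn_succ_succ (a b : ℕ) : betaFn (a + 1) (b + 1) = betaNat a b := by
  rw [← integral_one_sub_pow_mul_pow, betaFn, Nat.add_sub_cancel, Nat.add_sub_cancel]
  simpa using
    (integral_comp_sub_left (fun t => t ^ a * (1 - t) ^ b) (1 : ℝ) (a := 0) (b := 1)).symm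

lemma integral_neg_log_mul_pow (b : ℕ) :
    ∫ u in (0 : ℝ)..1, -log u * u ^ b = 1 / (b + 1) ^ 2 := by
  -- `u ↦ u^b · negMulLog u` is continuous at `0`, so the antiderivative needs no limit argument
  let F : ℝ → ℝ := fun u => u ^ (b + 1) / (b + 1) ^ 2 + u ^ b * negMulLog u / (b + 1)
  have hF : ∀ u ∈ Set.Ioo (0 : ℝ) 1, HasDerivAt F (-log u * u ^ b) u := by
    intro u hu
    have hu0 : u ≠ 0 := hu.1.ne'
    refine (((hasDerivAt_pow (b + 1) u).div_const ((b + 1 : ℝ) ^ 2)).add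
      (((hasDerivAt_pow b u).mul (hasDerivAt_negMulLog hu0)).div_const (b + 1 : ℝ)))
      |>.congr_deriv ?_
    rcases b with _ | b
    · simp [negMulLog]
    · simp only [negMulLog, Nat.cast_add, Nat.cast_one, add_tsub_cancel_right, pow_succ]
      field_simp
      ring
  rw [integral_eq_sub_of_hasDerivAt_of_le zero_le_one (by fun_prop) hF
    (intervalIntegrable_log'.neg.mul_continuousOn (by fun_prop))]
  simp [F]

lemma integral_neg_log_mul_one_sub_pow_mul_pow (a b : ℕ) :
    ∫ u in (0 : ℝ)..1, -log u * ((1 - u) ^ a * u ^ b) =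
      betaNat a b * (harmonicR (a + b + 1) - harmonicR b) := by
  induction a generalizing b with
  | zero =>
    simp only [pow_zero, one_mul, integral_neg_log_mul_pow, betaNat_zero_left, zero_add,
      harmonicR_succ]
    field_simp
    ring
  | succ a ih =>
    rw [integral_mul_one_sub_pow_succ_mul_pow (g := fun u => -log u)
        intervalIntegrable_log'.neg, ih, ih,
      betaNat_succ_left, betaNat_succ_right, show a + 1 + b + 1 = a + b + 1 + 1 by omega,
      show a + (b + 1) + 1 = a + b + 1 + 1 by omega, harmonicR_succ (a + b + 1), harmonicR_succ b]
    push_cast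
    field_simp
    ring

theorem beta_integral_neg_log_general (n r : ℕ) (hr1 : 1 ≤ r) (hrn : r ≤ n) :
    ∫ x in (0 : ℝ)..1,
        (-Real.log (1 - x)) * (x ^ (r - 1) * (1 - x) ^ (n - r) / betaFn r (n + 1 - r))
      = harmonicR n - harmonicR (n - r) := by
  obtain ⟨a, rfl⟩ : ∃ a, r = a + 1 := ⟨r - 1, by omega⟩
  obtain ⟨b, rfl⟩ : ∃ b, n = a + b + 1 := ⟨n - (a + 1), by omega⟩
  rw [show a + b + 1 - (a + 1) = b by omega, show a + b + 1 + 1 - (a + 1) = b + 1 by omega,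
    Nat.add_sub_cancel, betaFn_succ_succ]
  calc ∫ x in (0 : ℝ)..1, -log (1 - x) * (x ^ a * (1 - x) ^ b / betaNat a b)
      = (betaNat a b)⁻¹ *
          ∫ x in (0 : ℝ)..1, -log (1 - x) * ((1 - (1 - x)) ^ a * (1 - x) ^ b) := by
        rw [← integral_const_mul]
        congr 1
        ext x
        rw [sub_sub_cancel]
        ring
    _ = (betaNat a b)⁻¹ * ∫ u in (0 : ℝ)..1, -log u * ((1 - u) ^ a * u ^ b) := by
        rw [integral_comp_sub_left (fun u => -log u * ((1 - u) ^ a * u ^ b))]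
        norm_num
    _ = harmonicR (a + b + 1) - harmonicR b := by
        rw [integral_neg_log_mul_one_sub_pow_mul_pow, inv_mul_cancel_left₀ (betaNat_pos a b).ne']

/-- The Beta(r, n+1−r) expectation of `−log(1−x)` equals `H_n − H_{n−r}`. -/
theorem beta_integral_neg_log (n r : ℕ) (hn : 1 ≤ n) (hr1 : 1 ≤ r) (hrn : r ≤ n) :
    ∫ x in (0 : ℝ)..1,
        (-Real.log (1 - x)) * (x ^ (r - 1) * (1 - x) ^ (n - r) / betaFn r (n + 1 - r))
      = harmonicR n - harmonicR (n - r) :=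
  beta_integral_neg_log_general n r hr1 hrn
end

section
/- For every natural number n ≥ 1, (1/n) ∑_{r=1}^{n} ∑_{k=n+1−r}^{n} 1/k² = H_n / n, where H_n := ∑_{k=1}^{n} 1/k, and consequently (1/n) ∑_{r=1}^{n} ∑_{k=n+1−r}^{n} 1/k² ≤ (1 + log n)/n for all n ≥ 1. -/
open Finset

theorem harmonicR_eq_harmonic (m : ℕ) : harmonicR m = harmonic m := by
  simp [harmonicR, harmonic, one_div]

theorem sum_Icc_sum_Icc_sub_eq_sum_nsmul {M : Type*} [AddCommMonoid M] (n : ℕ) (f : ℕ → M) :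
    ∑ r ∈ Icc 1 n, ∑ k ∈ Icc (n + 1 - r) n, f k = ∑ k ∈ Icc 1 n, k • f k := by
  rw [sum_comm' (t' := Icc 1 n) (s' := fun k ↦ Icc (n + 1 - k) n)
    (fun r k ↦ by simp only [mem_Icc]; omega)]
  refine sum_congr rfl fun k hk ↦ ?_
  rw [sum_const, Nat.card_Icc, Nat.sub_sub_self (by simp at hk; omega)]

theorem sum_Icc_sum_Icc_sub_inv_sq (n : ℕ) :
    ∑ r ∈ Icc 1 n, ∑ k ∈ Icc (n + 1 - r) n, (1 : ℝ) / (k : ℝ) ^ 2 = harmonicR n := by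
  rw [sum_Icc_sum_Icc_sub_eq_sum_nsmul, harmonicR_eq_harmonic, harmonic_eq_sum_Icc]
  push_cast
  refine sum_congr rfl fun k hk ↦ ?_
  have hk0 : (k : ℝ) ≠ 0 := Nat.cast_ne_zero.mpr (by simp at hk; omega)
  rw [nsmul_eq_mul]
  field_simp

theorem avg_mse_eq_harmonic_div_general (n : ℕ) :
    ((1 / n : ℝ) * ∑ r ∈ Finset.Icc 1 n,
        ∑ k ∈ Finset.Icc (n + 1 - r) n, (1 : ℝ) / (k : ℝ) ^ 2
      = harmonicR n / n)
    ∧ (1 / n : ℝ) * ∑ r ∈ Finset.Icc 1 n,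
        ∑ k ∈ Finset.Icc (n + 1 - r) n, (1 : ℝ) / (k : ℝ) ^ 2
      ≤ (1 + Real.log n) / n := by
  rw [sum_Icc_sum_Icc_sub_inv_sq, one_div_mul_eq_div, harmonicR_eq_harmonic]
  exact ⟨rfl, div_le_div_of_nonneg_right (harmonic_le_one_add_log n) n.cast_nonneg⟩

/-- The average over ranks of the exact MSEs of the plug-in AURC weights equals
`H_n / n` and is therefore bounded by `(1 + log n)/n`. -/
theorem avg_mse_eq_harmonic_div (n : ℕ) (hn : 1 ≤ n) :
    ((1 / n : ℝ) * ∑ r ∈ Finset.Icc 1 n,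
        ∑ k ∈ Finset.Icc (n + 1 - r) n, (1 : ℝ) / (k : ℝ) ^ 2
      = harmonicR n / n)
    ∧ (1 / n : ℝ) * ∑ r ∈ Finset.Icc 1 n,
        ∑ k ∈ Finset.Icc (n + 1 - r) n, (1 : ℝ) / (k : ℝ) ^ 2
      ≤ (1 + Real.log n) / n :=
  avg_mse_eq_harmonic_div_general n
end
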